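/- Let B and C be A-bounded linear operators on H (i.e., there exists λ > 0 with ‖Bx‖_A ≤ λ‖x‖_A and ‖Cx‖_A ≤ λ‖x‖_A for all x). Then for every α ∈ [0,1], both w_A(√α·B + √(1−α)·C) ≤ w_{A,e}(B,C) and w_A(√α·B − √(1−α)·C) ≤ w_{A,e}(B,C). -/

import Mathlib

/-!
For `‖x‖_A = 1`, linearity of `⟨·, x⟩_A` and the triangle inequality give
`|⟨(sB + tC)x, x⟩_A| ≤ |s| |⟨Bx, x⟩_A| + |t| |⟨Cx, x⟩_A|`, and by the Cauchy–Schwarz inequality in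
`ℝ²` this is at most `(|⟨Bx, x⟩_A|² + |⟨Cx, x⟩_A|²)^{1/2} ≤ w_{A,e}(B, C)` whenever
`|s|² + |t|² ≤ 1`. Take `(s, t) = (√α, ±√(1 - α))`.
-/

noncomputable section

open scoped ComplexInnerProductSpace

variable {H : Type*} [NormedAddCommGroup H] [InnerProductSpace ℂ H] [CompleteSpace H]

/-- The semi-inner product induced by a positive operator `A`:
`⟨x,y⟩_A = ⟨Ax,y⟩` (linear in the first argument, following the paper's convention). -/
def innerA (A : H →L[ℂ] H) (x y : H) : ℂ := ⟪y, A x⟫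

/-- The seminorm induced by `A`: `‖x‖_A = ⟨Ax,x⟩^{1/2}`. -/
def normA (A : H →L[ℂ] H) (x : H) : ℝ := Real.sqrt (innerA A x x).re

/-- The `A`-numerical radius `w_A(T) = sup { |⟨Tx,x⟩_A| : ‖x‖_A = 1 }`. -/
def wA (A T : H →L[ℂ] H) : ℝ :=
  sSup {r : ℝ | ∃ x : H, normA A x = 1 ∧ r = ‖innerA A (T x) x‖}

/-- The `A`-Crawford number `c_A(T) = inf { |⟨Tx,x⟩_A| : ‖x‖_A = 1 }`. -/
def cA (A T : H →L[ℂ] H) : ℝ :=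
  sInf {r : ℝ | ∃ x : H, normA A x = 1 ∧ r = ‖innerA A (T x) x‖}

/-- The `A`-operator seminorm `‖T‖_A = sup { ‖Tx‖_A : ‖x‖_A = 1 }`. -/
def opNormA (A T : H →L[ℂ] H) : ℝ :=
  sSup {r : ℝ | ∃ x : H, normA A x = 1 ∧ r = normA A (T x)}

/-- The `A`-Euclidean operator radius of the pair `(B, C)`. -/
def wAe (A B C : H →L[ℂ] H) : ℝ :=
  sSup {r : ℝ | ∃ x : H, normA A x = 1 ∧
    r = Real.sqrt ((‖innerA A (B x) x‖)^2 + (‖innerA A (C x) x‖)^2)}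

/-- The `A`-Euclidean operator seminorm of the pair `(B, C)`. -/
def normAe (A B C : H →L[ℂ] H) : ℝ :=
  sSup {r : ℝ | ∃ x : H, normA A x = 1 ∧
    r = Real.sqrt ((normA A (B x))^2 + (normA A (C x))^2)}

/-- `Re_A(T) = (T + T♯)/2`, where `Ts` is an `A`-adjoint of `T`. -/
def ReA (T Ts : H →L[ℂ] H) : H →L[ℂ] H := (2 : ℂ)⁻¹ • (T + Ts)

/-- `Im_A(T) = (T - T♯)/(2i)`, where `Ts` is an `A`-adjoint of `T`. -/
def ImA (T Ts : H →L[ℂ] H) : H →L[ℂ] H := (2 * Complex.I)⁻¹ • (T - Ts)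

theorem norm_mul_add_mul_le_sqrt {R : Type*} [SeminormedRing R] {s t : R}
    (hst : ‖s‖ ^ 2 + ‖t‖ ^ 2 ≤ 1) (u v : R) :
    ‖s * u + t * v‖ ≤ √(‖u‖ ^ 2 + ‖v‖ ^ 2) := by
  calc ‖s * u + t * v‖ ≤ ‖s‖ * ‖u‖ + ‖t‖ * ‖v‖ :=
        (norm_add_le _ _).trans (add_le_add (norm_mul_le s u) (norm_mul_le t v))
    _ ≤ √(‖u‖ ^ 2 + ‖v‖ ^ 2) := by
        apply Real.le_sqrt_of_sq_le
        nlinarith [sq_nonneg (‖s‖ * ‖v‖ - ‖t‖ * ‖u‖), mul_nonneg (sq_nonneg ‖u‖) (norm_nonneg s)]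

section SemiInner

variable {E : Type*} [NormedAddCommGroup E] [InnerProductSpace ℂ E] {A : E →L[ℂ] E}

theorem innerA_add_left (x y z : E) : innerA A (x + y) z = innerA A x z + innerA A y z := by
  simp only [innerA, map_add, inner_add_right]

theorem innerA_smul_left (c : ℂ) (x y : E) : innerA A (c • x) y = c * innerA A x y := by
  simp only [innerA, map_smul, inner_smul_right]

/-- Mathlib's inner products are conjugate-linear in the first argument, so the core carries
`(x, y) ↦ ⟨y, x⟩_A`. -/
abbrev ContinuousLinearMap.IsPositive.innerACore (hA : A.IsPositive) :
    PreInnerProductSpace.Core ℂ E where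
  inner x y := innerA A y x
  conj_inner_symm x y := by
    simp only [innerA, inner_conj_symm, hA.inner_left_eq_inner_right]
  re_inner_nonneg x := hA.re_inner_nonneg_right x
  add_left x y z := by simp only [innerA, inner_add_left]
  smul_left x y c := by simp only [innerA, inner_smul_left]

theorem norm_innerA_le (hA : A.IsPositive) (x y : E) :
    ‖innerA A x y‖ ≤ normA A x * normA A y :=
  mul_comm (normA A y) (normA A x) ▸
    InnerProductSpace.Core.norm_inner_le_norm (c := hA.innerACore) y x

theorem norm_innerA_apply_self_le (hA : A.IsPositive) {T : E →L[ℂ] E} {lam : ℝ}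
    (hT : ∀ x, normA A (T x) ≤ lam * normA A x) {x : E} (hx : normA A x = 1) :
    ‖innerA A (T x) x‖ ≤ lam :=
  calc ‖innerA A (T x) x‖ ≤ normA A (T x) * normA A x := norm_innerA_le hA _ _
    _ ≤ lam := by simpa [hx] using hT x

theorem bddAbove_wAe_set (hA : A.IsPositive) {B C : E →L[ℂ] E} {lam : ℝ}
    (hB : ∀ x, normA A (B x) ≤ lam * normA A x) (hC : ∀ x, normA A (C x) ≤ lam * normA A x) :
    BddAbove {r : ℝ | ∃ x : E, normA A x = 1 ∧
      r = √(‖innerA A (B x) x‖ ^ 2 + ‖innerA A (C x) x‖ ^ 2)} := by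
  refine ⟨√(lam ^ 2 + lam ^ 2), ?_⟩
  rintro r ⟨x, hx, rfl⟩
  have hBx := norm_innerA_apply_self_le hA hB hx
  have hCx := norm_innerA_apply_self_le hA hC hx
  gcongr

theorem wA_smul_add_smul_le_wAe (hA : A.IsPositive) {B C : E →L[ℂ] E} {lam : ℝ}
    (hB : ∀ x, normA A (B x) ≤ lam * normA A x) (hC : ∀ x, normA A (C x) ≤ lam * normA A x)
    {s t : ℂ} (hst : ‖s‖ ^ 2 + ‖t‖ ^ 2 ≤ 1) :
    wA A (s • B + t • C) ≤ wAe A B C := by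
  have hwAe_nonneg : 0 ≤ wAe A B C :=
    Real.sSup_nonneg fun _ ⟨_, _, hr⟩ => hr ▸ Real.sqrt_nonneg _
  refine Real.sSup_le ?_ hwAe_nonneg
  rintro r ⟨x, hx, rfl⟩
  calc ‖innerA A ((s • B + t • C) x) x‖
      = ‖s * innerA A (B x) x + t * innerA A (C x) x‖ := by
        simp only [add_apply, smul_apply, innerA_add_left, innerA_smul_left]
    _ ≤ √(‖innerA A (B x) x‖ ^ 2 + ‖innerA A (C x) x‖ ^ 2) := norm_mul_add_mul_le_sqrt hst _ _
    _ ≤ wAe A B C := le_csSup (bddAbove_wAe_set hA hB hC) ⟨x, hx, rfl⟩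

end SemiInner

theorem stmt17_general (A : H →L[ℂ] H) (hA : A.IsPositive)
    (B C : H →L[ℂ] H)
    (hBC : ∃ lam : ℝ, 0 < lam ∧ ∀ x : H,
      normA A (B x) ≤ lam * normA A x ∧ normA A (C x) ≤ lam * normA A x)
    (α : ℝ) (hα : α ∈ Set.Icc (0 : ℝ) 1) :
    wA A (((Real.sqrt α : ℂ)) • B + ((Real.sqrt (1 - α) : ℂ)) • C) ≤ wAe A B C
      ∧ wA A (((Real.sqrt α : ℂ)) • B - ((Real.sqrt (1 - α) : ℂ)) • C) ≤ wAe A B C := by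
  obtain ⟨lam, -, hBC⟩ := hBC
  have hB x := (hBC x).1
  have hC x := (hBC x).2
  obtain ⟨hα0, hα1⟩ := hα
  have hst : ‖(√α : ℂ)‖ ^ 2 + ‖(√(1 - α) : ℂ)‖ ^ 2 ≤ 1 := by
    simp only [Complex.norm_real, Real.norm_of_nonneg (Real.sqrt_nonneg _),
      Real.sq_sqrt hα0, Real.sq_sqrt (sub_nonneg.mpr hα1)]
    linarith
  refine ⟨wA_smul_add_smul_le_wAe hA hB hC hst, ?_⟩
  rw [sub_eq_add_neg, ← neg_smul]
  exact wA_smul_add_smul_le_wAe hA hB hC (by rwa [norm_neg])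

theorem stmt17 (A : H →L[ℂ] H) (hA : A.IsPositive) (hA0 : A ≠ 0)
    (B C : H →L[ℂ] H)
    (hBC : ∃ lam : ℝ, 0 < lam ∧ ∀ x : H,
      normA A (B x) ≤ lam * normA A x ∧ normA A (C x) ≤ lam * normA A x)
    (α : ℝ) (hα : α ∈ Set.Icc (0 : ℝ) 1) :
    wA A (((Real.sqrt α : ℂ)) • B + ((Real.sqrt (1 - α) : ℂ)) • C) ≤ wAe A B C
      ∧ wA A (((Real.sqrt α : ℂ)) • B - ((Real.sqrt (1 - α) : ℂ)) • C) ≤ wAe A B C :=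
  stmt17_general A hA B C hBC α hα
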